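/- arXiv:1508.03437 — 7 statements merged into one kernel-verified Lean document; each statement's English description precedes it below -/
import Mathlib

section
/- Let G be a finite simple graph and k a positive integer. Then G is k-choosable if and only if G is C-colorable for every consistent k-correspondence assignment C for G. -/
/-- A `k`-correspondence assignment for a graph `G`: to each ordered pair of adjacent
vertices it assigns a partial injective function (partial equivalence) on colors
`Fin k`, such that `C_{vu}` is the inverse of `C_{uv}`. -/
structure CorrAssign {V : Type*} (G : SimpleGraph V) (k : ℕ) where
  corr : V → V → (Fin k) ≃. (Fin k)
  corr_symm : ∀ u v, G.Adj u v → corr v u = (corr u v).symm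

namespace CorrAssign

variable {V : Type*} {G : SimpleGraph V} {k : ℕ}

/-- A `C`-coloring of `G`. -/
def IsColoring (C : CorrAssign G k) (f : V → Fin k) : Prop :=
  ∀ u v, G.Adj u v → C.corr u v (f u) ≠ some (f v)

/-- `G` is `C`-colorable. -/
def Colorable (C : CorrAssign G k) : Prop := ∃ f, C.IsColoring f

/-- The composed correspondence along a walk. -/
def walkCorr (C : CorrAssign G k) : {u v : V} → G.Walk u v → (Fin k) ≃. (Fin k)
  | _, _, SimpleGraph.Walk.nil => PEquiv.refl _
  | _, _, @SimpleGraph.Walk.cons _ _ a b _ _h p => (C.corr a b).trans (C.walkCorr p)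

/-- `C` is consistent on a closed walk `W`. -/
def ConsistentOn (C : CorrAssign G k) {u : V} (W : G.Walk u u) : Prop :=
  ∀ c c' : Fin k, C.walkCorr W c = some c' → c' = c

/-- `C` is consistent. -/
def Consistent (C : CorrAssign G k) : Prop :=
  ∀ (u : V) (W : G.Walk u u), C.ConsistentOn W

end CorrAssign

/-- `G` is `k`-choosable: any assignment of lists of `k` colors admits a proper coloring
from the lists. -/
def Choosable {V : Type*} (G : SimpleGraph V) (k : ℕ) : Prop :=
  ∀ L : V → Finset ℕ, (∀ v, (L v).card = k) →
    ∃ φ : V → ℕ, (∀ v, φ v ∈ L v) ∧ ∀ u v, G.Adj u v → φ u ≠ φ v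

namespace CorrAssign

variable {V : Type*} {G : SimpleGraph V} {k : ℕ}

theorem walkCorr_append (C : CorrAssign G k) {u v w : V} (p : G.Walk u v) (q : G.Walk v w) :
    C.walkCorr (p.append q) = (C.walkCorr p).trans (C.walkCorr q) := by
  induction p with
  | nil => simp [walkCorr, PEquiv.refl_trans]
  | cons h p ih => simp [walkCorr, SimpleGraph.Walk.cons_append, ih, PEquiv.trans_assoc]

theorem walkCorr_reverse (C : CorrAssign G k) {u v : V} (p : G.Walk u v) :
    C.walkCorr p.reverse = (C.walkCorr p).symm := by
  induction p with
  | nil => simp [walkCorr]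
  | @cons a b _ h p ih =>
    rw [SimpleGraph.Walk.reverse_cons, walkCorr_append, ih]
    show _ = ((C.corr a b).trans (C.walkCorr p)).symm
    rw [PEquiv.symm_trans_rev]
    congr 1
    show (C.corr b a).trans (PEquiv.refl _) = _
    rw [PEquiv.trans_refl, C.corr_symm a b h]

end CorrAssign

/-- Lemma 2 (Dvořák–Postle): a finite simple graph `G` is `k`-choosable if and only if
`G` is `C`-colorable for every consistent `k`-correspondence assignment `C`. -/
theorem choosable_iff_colorable_of_consistent {V : Type*} [Fintype V]
    (G : SimpleGraph V) (k : ℕ) (hk : 0 < k) :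
    Choosable G k ↔ ∀ C : CorrAssign G k, C.Consistent → C.Colorable := by
  classical
  constructor
  · -- choosable → colorable for every consistent C
    intro hch C hcons
    set R : V × Fin k → V × Fin k → Prop :=
      fun p q => G.Adj p.1 q.1 ∧ C.corr p.1 q.1 p.2 = some q.2 with hR
    have key : ∀ p q, Relation.EqvGen R p q →
        ∃ W : G.Walk p.1 q.1, C.walkCorr W p.2 = some q.2 := by
      intro p q h
      induction h with
      | rel x y hxy =>
          refine ⟨SimpleGraph.Walk.cons hxy.1 SimpleGraph.Walk.nil, ?_⟩
          show ((C.corr x.1 y.1).trans (PEquiv.refl _)) x.2 = some y.2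
          rw [PEquiv.trans_refl]
          exact hxy.2
      | refl x => exact ⟨SimpleGraph.Walk.nil, rfl⟩
      | symm x y _ ih =>
          obtain ⟨W, hW⟩ := ih
          refine ⟨W.reverse, ?_⟩
          rw [C.walkCorr_reverse]
          exact (PEquiv.eq_some_iff _).2 hW
      | trans x y z _ _ ih1 ih2 =>
          obtain ⟨W1, hW1⟩ := ih1
          obtain ⟨W2, hW2⟩ := ih2
          refine ⟨W1.append W2, ?_⟩
          rw [C.walkCorr_append, PEquiv.trans_eq_some]
          exact ⟨y.2, hW1, hW2⟩
    let s : Setoid (V × Fin k) := Relation.EqvGen.setoid R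
    haveI : Fintype (Quotient s) := Fintype.ofFinite _
    let e := Fintype.equivFin (Quotient s)
    let enc : V × Fin k → ℕ := fun p => (e (Quotient.mk s p) : ℕ)
    have inj : ∀ v (c c' : Fin k), enc (v, c) = enc (v, c') → c = c' := by
      intro v c c' h
      have h1 : Quotient.mk s (v, c) = Quotient.mk s (v, c') :=
        e.injective (Fin.val_injective h)
      have h2 : Relation.EqvGen R (v, c) (v, c') := Quotient.exact h1
      obtain ⟨W, hW⟩ := key _ _ h2
      exact (hcons v W c c' hW).symm
    set L : V → Finset ℕ := fun v => Finset.image (fun c => enc (v, c)) Finset.univ with hL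
    have hcard : ∀ v, (L v).card = k := by
      intro v
      rw [hL]
      rw [Finset.card_image_of_injective _ (fun c c' h => inj v c c' h),
        Finset.card_univ, Fintype.card_fin]
    obtain ⟨φ, hmem, hproper⟩ := hch L hcard
    have hex : ∀ v, ∃ c : Fin k, enc (v, c) = φ v := by
      intro v
      obtain ⟨c, _, hc⟩ := Finset.mem_image.mp (hmem v)
      exact ⟨c, hc⟩
    choose f hf using hex
    refine ⟨f, fun u v huv hbad => hproper u v huv ?_⟩
    have h1 : Relation.EqvGen R (u, f u) (v, f v) :=
      Relation.EqvGen.rel _ _ ⟨huv, hbad⟩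
    calc φ u = enc (u, f u) := (hf u).symm
      _ = enc (v, f v) := congrArg (fun q => (e q : ℕ)) (Quotient.sound h1)
      _ = φ v := hf v
  · -- colorable for every consistent C → choosable
    intro h L hL
    let g : V → Fin k → ℕ := fun v i => ((L v).orderIsoOfFin (hL v) i : ℕ)
    have ginj : ∀ v, Function.Injective (g v) := by
      intro v a b hab
      exact ((L v).orderIsoOfFin (hL v)).injective (Subtype.coe_injective hab)
    have gmem : ∀ v i, g v i ∈ L v := fun v i => ((L v).orderIsoOfFin (hL v) i).2
    let F : V → V → Fin k → Option (Fin k) := fun u v a =>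
      if hx : ∃ j, g v j = g u a then some hx.choose else none
    have Fspec : ∀ u v a b, F u v a = some b ↔ g v b = g u a := by
      intro u v a b
      show (if hx : ∃ j, g v j = g u a then some hx.choose else none) = some b ↔ _
      split_ifs with hx
      · constructor
        · intro hb
          cases Option.some.inj hb
          exact hx.choose_spec
        · intro hb
          exact congrArg some (ginj v (hx.choose_spec.trans hb.symm))
      · constructor
        · intro hb; exact hb.elim
        · intro hb; exact absurd ⟨b, hb⟩ hx
    let C : CorrAssign G k :=
      { corr := fun u v =>
          ⟨F u v, F v u, fun a b => by
            rw [Fspec, Fspec]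
            exact eq_comm⟩
        corr_symm := fun u v _ => rfl }
    have walkspec : ∀ (u v : V) (W : G.Walk u v) (c c' : Fin k),
        C.walkCorr W c = some c' → g v c' = g u c := by
      intro u v W
      induction W with
      | nil =>
          intro c c' hc
          simp only [CorrAssign.walkCorr, PEquiv.refl_apply] at hc
          cases Option.some.inj hc
          rfl
      | @cons a x _ hadj p ih =>
          intro c c' hc
          simp only [CorrAssign.walkCorr] at hc
          rw [PEquiv.trans_eq_some] at hc
          obtain ⟨b, h1, h2⟩ := hc
          have h1' : g x b = g a c := (Fspec a x c b).1 h1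
          exact (ih b c' h2).trans h1'
    have hconsC : C.Consistent := by
      intro u W c c' hc
      exact ginj u (walkspec u u W c c' hc)
    obtain ⟨f, hf⟩ := h C hconsC
    refine ⟨fun v => g v (f v), fun v => gmem v (f v), fun u v huv heq => ?_⟩
    exact hf u v huv ((Fspec u v (f u) (f v)).2 heq.symm)
end

section
/- Let G be a finite simple graph and k a positive integer. If G is C-colorable for every consistent k-correspondence assignment C for G, then G is k-choosable. -/
section Proof

open Function

variable {V : Type*} {G : SimpleGraph V} {k : ℕ}

private lemma walkCorr_sigma (C : CorrAssign G k) (σ : V → Fin k → ℕ)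
    (hσ : ∀ v, Function.Injective (σ v))
    (hcorr : ∀ u v (c c' : Fin k), C.corr u v c = some c' → σ u c = σ v c') :
    ∀ {u v : V} (W : G.Walk u v) (c c' : Fin k),
      C.walkCorr W c = some c' → σ u c = σ v c' := by
  intro u v W
  induction W with
  | nil => intro c c' hc; simp [CorrAssign.walkCorr, PEquiv.refl] at hc; subst hc; rfl
  | cons h p ih =>
      intro c c' hc
      simp only [CorrAssign.walkCorr] at hc
      rw [PEquiv.trans_eq_some] at hc
      obtain ⟨b, hb1, hb2⟩ := hc
      exact (hcorr _ _ _ _ hb1).trans (ih b c' hb2)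

theorem choosable_of_colorable_of_consistent' {V : Type*} [Fintype V]
    (G : SimpleGraph V) (k : ℕ) (hk : 0 < k)
    (h : ∀ C : CorrAssign G k, C.Consistent → C.Colorable) :
    Choosable G k := by
  intro L hL
  -- enumerate each list
  set σ : V → Fin k → ℕ := fun v i => ((L v).orderIsoOfFin (hL v) i : ℕ) with hσdef
  have hσinj : ∀ v, Function.Injective (σ v) := by
    intro v a b hab
    exact (L v).orderIsoOfFin (hL v) |>.injective (Subtype.ext hab)
  have hmem : ∀ v i, σ v i ∈ L v := fun v i => ((L v).orderIsoOfFin (hL v) i).2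
  -- the correspondence assignment
  have key : ∀ u v (c c' : Fin k),
      (partialInv (σ v) (σ u c) = some c') ↔ σ v c' = σ u c := by
    intro u v c c'
    exact partialInv_of_injective (hσinj v) c' (σ u c)
  set C : CorrAssign G k :=
    { corr := fun u v =>
        { toFun := fun i => partialInv (σ v) (σ u i)
          invFun := fun j => partialInv (σ u) (σ v j)
          inv := by
            intro a b
            rw [key v u b a, key u v a b]
            constructor <;> (intro He; exact He.symm) }
      corr_symm := by
        intro u v _
        apply PEquiv.ext
        intro x
        rfl } with hCdef
  have hcorr : ∀ u v (c c' : Fin k), C.corr u v c = some c' → σ u c = σ v c' := by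
    intro u v c c' hc
    have := (key u v c c').1 hc
    exact this.symm
  have hcons : C.Consistent := by
    intro u W c c' hc
    have := walkCorr_sigma C σ hσinj hcorr W c c' hc
    exact hσinj u this.symm
  obtain ⟨f, hf⟩ := h C hcons
  refine ⟨fun v => σ v (f v), fun v => hmem v (f v), ?_⟩
  intro u v huv heq
  apply hf u v huv
  show partialInv (σ v) (σ u (f u)) = some (f v)
  exact (key u v (f u) (f v)).2 heq.symm

end Proof

/-- If a finite simple graph `G` is `C`-colorable for every consistent
`k`-correspondence assignment `C`, then `G` is `k`-choosable. -/
theorem choosable_of_colorable_of_consistent {V : Type*} [Fintype V]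
    (G : SimpleGraph V) (k : ℕ) (hk : 0 < k)
    (h : ∀ C : CorrAssign G k, C.Consistent → C.Colorable) :
    Choosable G k := by
  exact choosable_of_colorable_of_consistent' G k hk h
end

section
/- Let G be a finite simple graph and k a positive integer. If G is k-choosable, then G is C-colorable for every consistent k-correspondence assignment C for G. -/
open SimpleGraph

namespace CorrAssign

variable {V : Type*} {G : SimpleGraph V} {k : ℕ}

def coverGraph (C : CorrAssign G k) : SimpleGraph (V × Fin k) where
  Adj p q := G.Adj p.1 q.1 ∧ C.corr p.1 q.1 p.2 = some q.2
  symm := ⟨by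
    rintro ⟨u, a⟩ ⟨v, b⟩ ⟨hadj, hab⟩
    refine ⟨hadj.symm, ?_⟩
    rw [C.corr_symm u v hadj, PEquiv.eq_some_iff]
    exact hab⟩
  loopless := ⟨fun _ h => h.1.ne rfl⟩

theorem coverGraph_adj (C : CorrAssign G k) {p q : V × Fin k} :
    C.coverGraph.Adj p q ↔ G.Adj p.1 q.1 ∧ C.corr p.1 q.1 p.2 = some q.2 :=
  Iff.rfl

theorem exists_walkCorr_eq_some_of_walk (C : CorrAssign G k) {p q : V × Fin k}
    (w : C.coverGraph.Walk p q) : ∃ W : G.Walk p.1 q.1, C.walkCorr W p.2 = some q.2 := by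
  induction w with
  | nil => exact ⟨Walk.nil, rfl⟩
  | cons h _ ih =>
    obtain ⟨W, hW⟩ := ih
    obtain ⟨hG, hC⟩ := C.coverGraph_adj.1 h
    refine ⟨Walk.cons hG W, ?_⟩
    change (C.corr _ _ _).bind (C.walkCorr W) = _
    rw [hC]
    exact hW

theorem Consistent.injective_connectedComponentMk {C : CorrAssign G k} (hC : C.Consistent)
    (v : V) : Function.Injective fun a : Fin k => C.coverGraph.connectedComponentMk (v, a) := by
  intro a b hab
  obtain ⟨w⟩ := ConnectedComponent.exact hab
  obtain ⟨W, hW⟩ := C.exists_walkCorr_eq_some_of_walk w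
  exact (hC v W a b hW).symm

theorem colorable_of_choosable_of_labelling (C : CorrAssign G k)
    (hG : Choosable G k) (σ : V → Fin k → ℕ) (hσ : ∀ v, Function.Injective (σ v))
    (hσ_adj : ∀ p q, C.coverGraph.Adj p q → σ p.1 p.2 = σ q.1 q.2) : C.Colorable := by
  classical
  obtain ⟨φ, hφL, hφ⟩ := hG (fun v => Finset.univ.image (σ v)) fun v => by
    rw [Finset.card_image_of_injective _ (hσ v), Finset.card_univ, Fintype.card_fin]
  have hφσ : ∀ v, ∃ a, σ v a = φ v := fun v => by
    simpa only [Finset.mem_image, Finset.mem_univ, true_and] using hφL v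
  choose f hf using hφσ
  refine ⟨f, fun u v huv hC => hφ u v huv ?_⟩
  rw [← hf u, ← hf v]
  exact hσ_adj (u, f u) (v, f v) (C.coverGraph_adj.2 ⟨huv, hC⟩)

end CorrAssign

theorem colorable_of_consistent_of_choosable_general {V : Type*} [Fintype V]
    (G : SimpleGraph V) (k : ℕ)
    (h : Choosable G k) :
    ∀ C : CorrAssign G k, C.Consistent → C.Colorable := by
  intro C hC
  obtain ⟨ι, hι⟩ := Countable.exists_injective_nat C.coverGraph.ConnectedComponent
  refine C.colorable_of_choosable_of_labelling h
    (fun v a => ι (C.coverGraph.connectedComponentMk (v, a)))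
    (fun v => hι.comp (hC.injective_connectedComponentMk v)) fun p q hpq => ?_
  exact congrArg ι (ConnectedComponent.eq.2 hpq.reachable)

/-- If a finite simple graph `G` is `k`-choosable, then `G` is `C`-colorable for every
consistent `k`-correspondence assignment `C`. -/
theorem colorable_of_consistent_of_choosable {V : Type*} [Fintype V]
    (G : SimpleGraph V) (k : ℕ) (hk : 0 < k)
    (h : Choosable G k) :
    ∀ C : CorrAssign G k, C.Consistent → C.Colorable :=
  colorable_of_consistent_of_choosable_general G k h
end

section
/- Let G be a finite simple graph with a k-correspondence assignment C, and let H be a subgraph of G such that for every cycle K in H, the assignment C is consistent on K (regarded as a closed walk) and all edges of K are full in C. Then there exists a k-correspondence assignment C' for G equivalent to C such that all edges of H are straight in C' and all vertices of G not belonging to H are fixed in the equivalence. -/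
namespace CorrAssign

variable {V : Type*} {G : SimpleGraph V} {k : ℕ}

/-- `C` and `C'` are equivalent `k`-correspondence assignments, witnessed by the family of
permutations `π`: for every edge `uv`, a color `c` lies in the domain of `C_{uv}` iff
`π u c` lies in the domain of `C'_{uv}`, and `C'_{uv} (π u c) = π v (C_{uv} c)` there.
(Both conditions are captured by `Option.map`.) -/
def EquivVia (C C' : CorrAssign G k) (π : V → Equiv.Perm (Fin k)) : Prop :=
  ∀ u v, G.Adj u v → ∀ c : Fin k, C'.corr u v (π u c) = Option.map (π v) (C.corr u v c)

/-- The edge `uv` is straight in `C`: `C_{uv}` is the identity on its domain. -/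
def Straight (C : CorrAssign G k) (u v : V) : Prop :=
  ∀ c c' : Fin k, C.corr u v c = some c' → c' = c

/-- The edge `uv` is full in `C`: the domain of `C_{uv}` is all of `Fin k`. -/
def Full (C : CorrAssign G k) (u v : V) : Prop :=
  ∀ c : Fin k, (C.corr u v c).isSome

end CorrAssign

open SimpleGraph

theorem PEquiv.exists_perm_extends_symm {α : Type*} [Finite α] (f : α ≃. α) :
    ∃ σ : Equiv.Perm α, ∀ x y, f x = some y → σ y = x := by
  let graph := {p : α × α // f p.1 = some p.2}
  have hsnd : Function.Injective fun p : graph => p.1.2 := by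
    rintro ⟨⟨x, y⟩, hxy⟩ ⟨⟨x', y⟩, hxy'⟩ rfl
    obtain rfl := f.inj hxy hxy'
    rfl
  have hfst : Function.Injective fun p : graph => p.1.1 := by
    rintro ⟨⟨x, y⟩, hxy⟩ ⟨⟨x, y'⟩, hxy'⟩ rfl
    obtain rfl := Option.some_injective _ (hxy.symm.trans hxy')
    rfl
  obtain ⟨σ, hσ⟩ := Equiv.Perm.exists_extending_pair _ _ hsnd hfst
  exact ⟨σ, fun x y h => hσ ⟨(x, y), h⟩⟩

theorem SimpleGraph.Subgraph.mem_verts_of_reachable {V : Type*} {G : SimpleGraph V}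
    {H : G.Subgraph} {u v : V} (hu : u ∈ H.verts) (h : H.spanningCoe.Reachable u v) :
    v ∈ H.verts := by
  obtain ⟨p⟩ := h.symm
  cases p with
  | nil => exact hu
  | cons hadj _ => exact hadj.fst_mem

namespace CorrAssign

variable {V : Type*} {G : SimpleGraph V} {k : ℕ}

def StraightOn (C : CorrAssign G k) (H : G.Subgraph) : Prop :=
  ∀ a b, H.Adj a b → C.Straight a b

theorem Straight.symm {C : CorrAssign G k} {u v : V} (hadj : G.Adj u v)
    (h : C.Straight u v) : C.Straight v u := by
  intro c c' hcc
  rw [C.corr_symm u v hadj] at hcc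
  exact (h c' c ((C.corr u v).eq_some_iff.mp hcc)).symm

theorem walkCorr_apply_of_straight_full (C : CorrAssign G k) {u v : V} (W : G.Walk u v)
    (h : ∀ a b, G.Adj a b → s(a, b) ∈ W.edges → C.Straight a b ∧ C.Full a b) (x : Fin k) :
    C.walkCorr W x = some x := by
  induction W generalizing x with
  | nil => rfl
  | @cons a b w hadj p ih =>
    obtain ⟨hstr, hfull⟩ := h a b hadj (by simp)
    obtain ⟨y, hy⟩ := Option.isSome_iff_exists.mp (hfull x)
    change (C.corr a b x).bind (C.walkCorr p) = some x
    rw [hy, hstr x y hy, Option.bind_some]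
    exact ih (fun a' b' h₁ h₂ => h a' b' h₁ (by simp [h₂])) x

theorem Straight.of_consistentOn_cons {C : CorrAssign G k} {a b : V} (hab : G.Adj a b)
    (P : G.Walk b a) (hP : ∀ u v, G.Adj u v → s(u, v) ∈ P.edges → C.Straight u v ∧ C.Full u v)
    (hK : C.ConsistentOn (Walk.cons hab P)) : C.Straight a b := by
  intro x y hxy
  apply hK
  change (C.corr a b x).bind (C.walkCorr P) = some y
  rw [hxy, Option.bind_some, C.walkCorr_apply_of_straight_full P hP]

def relabel (C : CorrAssign G k) (ρ : V → Equiv.Perm (Fin k)) : CorrAssign G k where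
  corr u v := (ρ u).symm.toPEquiv.trans ((C.corr u v).trans (ρ v).toPEquiv)
  corr_symm u v h := by
    rw [C.corr_symm u v h, PEquiv.symm_trans_rev, PEquiv.symm_trans_rev,
      ← Equiv.toPEquiv_symm, ← Equiv.toPEquiv_symm, Equiv.symm_symm, PEquiv.trans_assoc]

theorem relabel_corr_apply (C : CorrAssign G k) (ρ : V → Equiv.Perm (Fin k)) (u v : V)
    (c : Fin k) :
    (C.relabel ρ).corr u v c = (C.corr u v ((ρ u).symm c)).map (ρ v) := by
  change (C.corr u v ((ρ u).symm c)).bind (ρ v).toPEquiv = _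
  cases C.corr u v ((ρ u).symm c) <;> rfl

theorem equivVia_relabel (C : CorrAssign G k) (ρ : V → Equiv.Perm (Fin k)) :
    C.EquivVia (C.relabel ρ) ρ := by
  intro u v _ c
  simp [relabel_corr_apply]

theorem Straight.relabel {C : CorrAssign G k} {u v : V} (h : C.Straight u v)
    {ρ : V → Equiv.Perm (Fin k)} (hρ : ρ u = ρ v) : (C.relabel ρ).Straight u v := by
  intro c c' hcc
  rw [relabel_corr_apply, Option.map_eq_some_iff] at hcc
  obtain ⟨d, hd, rfl⟩ := hcc
  rw [h _ _ hd, hρ, Equiv.apply_symm_apply]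

theorem equivVia_refl (C : CorrAssign G k) : C.EquivVia C 1 := by
  intro u v _ c
  simp

theorem EquivVia.trans {C C' C'' : CorrAssign G k} {π ρ : V → Equiv.Perm (Fin k)}
    (h₁ : C.EquivVia C' π) (h₂ : C'.EquivVia C'' ρ) : C.EquivVia C'' (ρ * π) := by
  intro u v hadj c
  simp only [Pi.mul_apply, Equiv.Perm.mul_apply]
  rw [h₂ u v hadj, h₁ u v hadj, Option.map_map]
  rfl

theorem EquivVia.full {C C' : CorrAssign G k} {π : V → Equiv.Perm (Fin k)}
    (h : C.EquivVia C' π) {u v : V} (hadj : G.Adj u v) (hf : C.Full u v) : C'.Full u v := by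
  intro c
  obtain ⟨c, rfl⟩ := (π u).surjective c
  rw [h u v hadj c, Option.isSome_map]
  exact hf c

theorem EquivVia.walkCorr {C C' : CorrAssign G k} {π : V → Equiv.Perm (Fin k)}
    (h : C.EquivVia C' π) {u v : V} (W : G.Walk u v) (c : Fin k) :
    C'.walkCorr W (π u c) = (C.walkCorr W c).map (π v) := by
  induction W generalizing c with
  | nil => rfl
  | @cons a b w hadj p ih =>
    change (C'.corr a b (π a c)).bind (C'.walkCorr p) =
      ((C.corr a b c).bind (C.walkCorr p)).map (π w)
    rw [h a b hadj c]
    cases C.corr a b c with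
    | none => rfl
    | some d => exact ih d

theorem EquivVia.consistentOn {C C' : CorrAssign G k} {π : V → Equiv.Perm (Fin k)}
    (h : C.EquivVia C' π) {u : V} {W : G.Walk u u} (hW : C.ConsistentOn W) :
    C'.ConsistentOn W := by
  intro c c' hcc
  obtain ⟨c, rfl⟩ := (π u).surjective c
  rw [h.walkCorr W c, Option.map_eq_some_iff] at hcc
  obtain ⟨d, hd, rfl⟩ := hcc
  rw [hW c d hd]

def ConsistentFullOnCycles (C : CorrAssign G k) (H : G.Subgraph) : Prop :=
  ∀ (u : V) (K : G.Walk u u), K.IsCycle → (∀ e ∈ K.edges, e ∈ H.edgeSet) →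
    C.ConsistentOn K ∧ ∀ a b : V, G.Adj a b → s(a, b) ∈ K.edges → C.Full a b

theorem ConsistentFullOnCycles.mono {C : CorrAssign G k} {H H' : G.Subgraph}
    (hC : C.ConsistentFullOnCycles H) (hle : H' ≤ H) : C.ConsistentFullOnCycles H' :=
  fun u K hK hKH => hC u K hK fun e he => Subgraph.edgeSet_mono hle (hKH e he)

theorem EquivVia.consistentFullOnCycles {C C' : CorrAssign G k} {π : V → Equiv.Perm (Fin k)}
    (h : C.EquivVia C' π) {H : G.Subgraph} (hC : C.ConsistentFullOnCycles H) :
    C'.ConsistentFullOnCycles H := by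
  intro u K hK hKH
  obtain ⟨hcons, hfull⟩ := hC u K hK hKH
  exact ⟨h.consistentOn hcons, fun a b hab he => h.full hab (hfull a b hab he)⟩

theorem StraightOn.of_deleteEdges {C : CorrAssign G k} {H : G.Subgraph} {a b : V}
    (hab : G.Adj a b) (hH : C.StraightOn (H.deleteEdges {s(a, b)})) (hstr : C.Straight a b) :
    C.StraightOn H := by
  intro u v huv
  by_cases he : s(u, v) = s(a, b)
  · rcases Sym2.eq_iff.mp he with ⟨rfl, rfl⟩ | ⟨rfl, rfl⟩
    · exact hstr
    · exact hstr.symm hab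
  · exact hH u v ⟨huv, he⟩

theorem straight_of_reachable_deleteEdges {C : CorrAssign G k} {H : G.Subgraph} {a b : V}
    (hC : C.ConsistentFullOnCycles H) (hab : H.Adj a b)
    (hH : C.StraightOn (H.deleteEdges {s(a, b)}))
    (hr : (H.deleteEdges {s(a, b)}).spanningCoe.Reachable b a) : C.Straight a b := by
  set H' := H.deleteEdges {s(a, b)}
  obtain ⟨P, hP⟩ := hr.exists_isPath
  set P' := P.mapLe H'.spanningCoe_le
  have hP'H' : ∀ e ∈ P'.edges, e ∈ H'.edgeSet := by
    intro e he
    rw [Walk.edges_mapLe_eq_edges] at he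
    rw [← H'.edgeSet_spanningCoe]
    exact P.edges_subset_edgeSet he
  have hK : (Walk.cons hab.adj_sub P').IsCycle :=
    (Walk.cons_isCycle_iff _ _).mpr ⟨hP.mapLe _, fun h => (hP'H' _ h).2 rfl⟩
  have hKH : ∀ e ∈ (Walk.cons hab.adj_sub P').edges, e ∈ H.edgeSet := by
    intro e he
    rcases List.mem_cons.mp he with rfl | he
    · exact hab
    · exact Subgraph.edgeSet_mono (Subgraph.deleteEdges_le _) (hP'H' e he)
  obtain ⟨hcons, hfull⟩ := hC a _ hK hKH
  refine Straight.of_consistentOn_cons hab.adj_sub P' (fun u v huv he => ?_) hcons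
  exact ⟨hH u v (hP'H' _ he), hfull u v huv (List.mem_cons_of_mem _ he)⟩

theorem exists_relabel_straight_of_not_reachable (C : CorrAssign G k) {F : G.Subgraph}
    {a b : V} (hF : C.StraightOn F) (hr : ¬F.spanningCoe.Reachable b a) :
    ∃ ρ : V → Equiv.Perm (Fin k), (C.relabel ρ).StraightOn F ∧ (C.relabel ρ).Straight a b ∧
      ∀ v, ¬F.spanningCoe.Reachable b v → ρ v = 1 := by
  classical
  obtain ⟨σ, hσ⟩ := (C.corr a b).exists_perm_extends_symm
  refine ⟨fun v => if F.spanningCoe.Reachable b v then σ else 1, fun u v huv => ?_, ?_,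
    fun v hv => if_neg hv⟩
  · have huv' : F.spanningCoe.Adj u v := huv
    have hreach : F.spanningCoe.Reachable b u ↔ F.spanningCoe.Reachable b v :=
      ⟨fun h => h.trans huv'.reachable, fun h => h.trans huv'.symm.reachable⟩
    exact (hF u v huv).relabel (by simp only [hreach])
  · intro c c' hcc
    rw [relabel_corr_apply, if_neg hr, if_pos Reachable.rfl, Option.map_eq_some_iff] at hcc
    obtain ⟨d, hd, rfl⟩ := hcc
    exact hσ c d hd

theorem exists_equivVia_straightOn_of_deleteEdges {C : CorrAssign G k} {H : G.Subgraph}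
    {a b : V} (hC : C.ConsistentFullOnCycles H) (hab : H.Adj a b)
    (hH : C.StraightOn (H.deleteEdges {s(a, b)})) :
    ∃ (C' : CorrAssign G k) (ρ : V → Equiv.Perm (Fin k)),
      C.EquivVia C' ρ ∧ C'.StraightOn H ∧ ∀ v ∉ H.verts, ρ v = 1 := by
  by_cases hr : (H.deleteEdges {s(a, b)}).spanningCoe.Reachable b a
  · exact ⟨C, 1, C.equivVia_refl,
      hH.of_deleteEdges hab.adj_sub (straight_of_reachable_deleteEdges hC hab hH hr),
      fun _ _ => rfl⟩
  · obtain ⟨ρ, hρH, hρab, hρ⟩ := C.exists_relabel_straight_of_not_reachable hH hr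
    exact ⟨C.relabel ρ, ρ, C.equivVia_relabel ρ, hρH.of_deleteEdges hab.adj_sub hρab,
      fun v hv => hρ v fun h => hv
        (Subgraph.mem_verts_of_reachable (H := H.deleteEdges _) hab.snd_mem h)⟩

end CorrAssign

/-- Lemma 4: let `G` be a finite simple graph with a `k`-correspondence assignment `C`,
and let `H` be a subgraph of `G` such that for every cycle `K` in `H` (a cycle of `G`
all of whose edges lie in `H`), the assignment `C` is consistent on `K` and all edges of
`K` are full in `C`. Then there is a `k`-correspondence assignment `C'` equivalent to
`C` in which all edges of `H` are straight, with all vertices outside `H` fixed. -/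
theorem straighten_subgraph {V : Type*} [Fintype V] {G : SimpleGraph V} {k : ℕ}
    (C : CorrAssign G k) (H : G.Subgraph)
    (hcyc : ∀ (u : V) (K : G.Walk u u), K.IsCycle → (∀ e ∈ K.edges, e ∈ H.edgeSet) →
      C.ConsistentOn K ∧ ∀ a b : V, G.Adj a b → s(a, b) ∈ K.edges → C.Full a b) :
    ∃ (C' : CorrAssign G k) (π : V → Equiv.Perm (Fin k)),
      C.EquivVia C' π ∧ (∀ a b : V, H.Adj a b → C'.Straight a b) ∧
      ∀ v : V, v ∉ H.verts → π v = 1 := by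
  by_cases hE : ∃ a b, H.Adj a b
  · obtain ⟨a, b, hab⟩ := hE
    have hle : H.deleteEdges {s(a, b)} ≤ H := Subgraph.deleteEdges_le _
    have : (H.deleteEdges {s(a, b)}).edgeSet.ncard < H.edgeSet.ncard :=
      Set.ncard_lt_ncard ((Set.ssubset_iff_of_subset (Subgraph.edgeSet_mono hle)).mpr
        ⟨s(a, b), hab, fun h => h.2 rfl⟩)
    obtain ⟨C₁, π₁, hC₁, hstr₁, hfix₁⟩ :=
      straighten_subgraph C (H.deleteEdges {s(a, b)})
        (CorrAssign.ConsistentFullOnCycles.mono hcyc hle)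
    obtain ⟨C₂, π₂, hC₂, hstr₂, hfix₂⟩ :=
      CorrAssign.exists_equivVia_straightOn_of_deleteEdges
        (hC₁.consistentFullOnCycles hcyc) hab hstr₁
    refine ⟨C₂, π₂ * π₁, hC₁.trans hC₂, hstr₂, fun v hv => ?_⟩
    rw [Pi.mul_apply, hfix₁ v hv, hfix₂ v hv, mul_one]
  · exact ⟨C, 1, C.equivVia_refl, fun a b hab => absurd ⟨a, b, hab⟩ hE, fun _ _ => rfl⟩
termination_by H.edgeSet.ncard
end

section
/- For every even integer n ≥ 4, there exists a 2-correspondence assignment C for the cycle graph on n vertices such that the cycle graph has no C-coloring. (Hence, although even cycles are 2-choosable, their correspondence chromatic number is 3.) -/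
open SimpleGraph

namespace CorrAssign

variable {V : Type*} [DecidableEq V] {G H : SimpleGraph V}

def twistAt (G : SimpleGraph V) (e : Sym2 V) : CorrAssign G 2 where
  corr u v := if s(u, v) = e then (Equiv.swap 0 1).toPEquiv else PEquiv.refl _
  corr_symm u v _ := by
    rw [Sym2.eq_swap]
    split_ifs <;> simp [← Equiv.toPEquiv_symm]

theorem isColoring_twistAt_iff {e : Sym2 V} {f : V → Fin 2} :
    (twistAt G e).IsColoring f ↔ ∀ u v, G.Adj u v → (f u = f v ↔ s(u, v) = e) := by
  have swap_ne_iff : ∀ a b : Fin 2, Equiv.swap 0 1 a ≠ b ↔ a = b := by decide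
  refine forall₃_congr fun u v _ => ?_
  simp only [twistAt]
  split_ifs with h <;> simp [h, swap_ne_iff]

theorem IsColoring.eq_of_twistAt {a b : V} {f : V → Fin 2}
    (hf : (twistAt G s(a, b)).IsColoring f) (hab : G.Adj a b) : f a = f b :=
  (isColoring_twistAt_iff.mp hf a b hab).mpr rfl

def IsColoring.coloringOfTwistAt {e : Sym2 V} {f : V → Fin 2} (hf : (twistAt G e).IsColoring f)
    (hHG : H ≤ G) (he : e ∉ H.edgeSet) : H.Coloring (Fin 2) :=
  Coloring.mk f fun {u v} huv heq =>
    he <| (isColoring_twistAt_iff.mp hf u v (hHG huv)).mp heq ▸ huv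

end CorrAssign

namespace SimpleGraph

theorem pathGraph_coloring_eq_zero_iff {m : ℕ} (c : (pathGraph (m + 1)).Coloring (Fin 2))
    (i : Fin (m + 1)) : c i = c 0 ↔ Even (i : ℕ) := by
  have ne_iff : ∀ a b z : Fin 2, a ≠ b → (b = z ↔ ¬ a = z) := by decide
  induction i using Fin.induction with
  | zero => simp
  | succ i ih =>
    have hadj : (pathGraph (m + 1)).Adj i.castSucc i.succ := by simp [pathGraph_adj]
    rw [ne_iff _ _ _ (c.valid hadj), Fin.val_succ, Nat.even_add_one]
    exact not_congr ih

theorem pathGraph_not_adj_zero_last {m : ℕ} (hm : 2 ≤ m) :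
    ¬ (pathGraph (m + 1)).Adj 0 (Fin.last m) := by
  rw [pathGraph_adj, Fin.val_zero, Fin.val_last]
  omega

theorem cycleGraph_adj_zero_last {m : ℕ} (hm : 1 ≤ m) :
    (cycleGraph (m + 1)).Adj 0 (Fin.last m) := by
  rw [cycleGraph_adj', zero_sub, Fin.neg_last, Fin.val_one', Nat.mod_eq_of_lt (by omega)]
  exact Or.inl rfl

end SimpleGraph

open SimpleGraph CorrAssign in
/-- For every even `n ≥ 4` there is a `2`-correspondence assignment `C` of the cycle on
`n` vertices admitting no `C`-coloring: even cycles are `2`-choosable, but their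
correspondence chromatic number is `3`. -/
theorem cycleGraph_not_corr_two_colorable (n : ℕ) (hn : 4 ≤ n) (heven : Even n) :
    ∃ C : CorrAssign (SimpleGraph.cycleGraph n) 2, ¬ C.Colorable := by
  obtain ⟨m, rfl⟩ : ∃ m, n = m + 1 := ⟨n - 1, by omega⟩
  refine ⟨twistAt _ s(0, Fin.last m), fun ⟨f, hf⟩ => ?_⟩
  have hlast : f (Fin.last m) = f 0 :=
    (hf.eq_of_twistAt (cycleGraph_adj_zero_last (by omega))).symm
  let c := hf.coloringOfTwistAt pathGraph_le_cycleGraph (pathGraph_not_adj_zero_last (by omega))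
  have hm : Even m := (pathGraph_coloring_eq_zero_iff c (Fin.last m)).mp hlast
  exact Nat.not_even_iff_odd.mpr hm.add_one heven
end

section
/- Let K be the triangle with vertices v_1, v_2, v_3, and let C be the 3-correspondence assignment for K defined by: C_{v_1v_2} has domain {1,2} with C_{v_1v_2}(1) = 1 and C_{v_1v_2}(2) = 2; C_{v_2v_3} has domain {1,3} with C_{v_2v_3}(1) = 1 and C_{v_2v_3}(3) = 3; and C_{v_3v_1} has domain {1,2} with C_{v_3v_1}(1) = 1 and C_{v_3v_1}(2) = 3. Then C is consistent on the closed walk v_1v_2v_3v_1, but there exists no 3-correspondence assignment C' equivalent to C in which all three edges of K are straight. -/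
/-- The correspondence on the edge `v₁v₂` (colors `1,2,3` are encoded as `0,1,2`):
`1 ↦ 1`, `2 ↦ 2`. -/
def corr₁₂ : (Fin 3) ≃. (Fin 3) :=
  ⟨![some 0, some 1, none], ![some 0, some 1, none], by decide⟩

/-- The correspondence on the edge `v₂v₃`: `1 ↦ 1`, `3 ↦ 3`. -/
def corr₂₃ : (Fin 3) ≃. (Fin 3) :=
  ⟨![some 0, none, some 2], ![some 0, none, some 2], by decide⟩

/-- The correspondence on the edge `v₃v₁`: `1 ↦ 1`, `2 ↦ 3`. -/
def corr₃₁ : (Fin 3) ≃. (Fin 3) :=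
  ⟨![some 0, some 2, none], ![some 0, none, some 1], by decide⟩

/-- The `3`-correspondence assignment of the remark after Lemma 4, on the triangle with
vertices `v₁ = 0`, `v₂ = 1`, `v₃ = 2`. -/
def triAssign : CorrAssign (⊤ : SimpleGraph (Fin 3)) 3 where
  corr u v :=
    match u, v with
    | 0, 1 => corr₁₂
    | 1, 0 => corr₁₂.symm
    | 1, 2 => corr₂₃
    | 2, 1 => corr₂₃.symm
    | 2, 0 => corr₃₁
    | 0, 2 => corr₃₁.symm
    | _, _ => PEquiv.refl _
  corr_symm := by
    intro u v huv
    fin_cases u <;> fin_cases v <;>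
      first
        | exact absurd rfl huv.ne'
        | rfl

/-- The closed walk `v₁v₂v₃v₁` in the triangle. -/
def triWalk : (⊤ : SimpleGraph (Fin 3)).Walk 0 0 :=
  .cons (show (⊤ : SimpleGraph (Fin 3)).Adj 0 1 by decide)
    (.cons (show (⊤ : SimpleGraph (Fin 3)).Adj 1 2 by decide)
      (.cons (show (⊤ : SimpleGraph (Fin 3)).Adj 2 0 by decide) .nil))

/-- The remark after Lemma 4: the assignment `triAssign` is consistent on the closed
walk `v₁v₂v₃v₁`, yet no equivalent `3`-correspondence assignment makes all three
edges of the triangle straight. -/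
theorem triAssign_consistent_but_not_straightenable :
    triAssign.ConsistentOn triWalk ∧
    ¬ ∃ (C' : CorrAssign (⊤ : SimpleGraph (Fin 3)) 3) (π : Fin 3 → Equiv.Perm (Fin 3)),
        triAssign.EquivVia C' π ∧
        ∀ u v : Fin 3, (⊤ : SimpleGraph (Fin 3)).Adj u v → C'.Straight u v := by
  constructor
  · intro c c' h
    revert h
    revert c c'
    decide
  · rintro ⟨C', π, hEq, hStr⟩
    have adj01 : (⊤ : SimpleGraph (Fin 3)).Adj 0 1 := by decide
    have adj12 : (⊤ : SimpleGraph (Fin 3)).Adj 1 2 := by decide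
    have adj20 : (⊤ : SimpleGraph (Fin 3)).Adj 2 0 := by decide
    have h1 : π 1 0 = π 0 0 := hStr 0 1 adj01 _ _ (by
      have := hEq 0 1 adj01 0
      rw [show triAssign.corr 0 1 0 = some 0 from rfl] at this
      simpa using this)
    have h2 : π 1 1 = π 0 1 := hStr 0 1 adj01 _ _ (by
      have := hEq 0 1 adj01 1
      rw [show triAssign.corr 0 1 1 = some 1 from rfl] at this
      simpa using this)
    have h3 : π 2 0 = π 1 0 := hStr 1 2 adj12 _ _ (by
      have := hEq 1 2 adj12 0
      rw [show triAssign.corr 1 2 0 = some 0 from rfl] at this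
      simpa using this)
    have h4 : π 2 2 = π 1 2 := hStr 1 2 adj12 _ _ (by
      have := hEq 1 2 adj12 2
      rw [show triAssign.corr 1 2 2 = some 2 from rfl] at this
      simpa using this)
    have h5 : π 0 0 = π 2 0 := hStr 2 0 adj20 _ _ (by
      have := hEq 2 0 adj20 0
      rw [show triAssign.corr 2 0 0 = some 0 from rfl] at this
      simpa using this)
    have h6 : π 0 2 = π 2 1 := hStr 2 0 adj20 _ _ (by
      have := hEq 2 0 adj20 1
      rw [show triAssign.corr 2 0 1 = some 2 from rfl] at this
      simpa using this)
    have key : ∀ a b c : Equiv.Perm (Fin 3), b 0 = a 0 → b 1 = a 1 → c 0 = b 0 →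
        c 2 = b 2 → a 0 = c 0 → a 2 = c 1 → False := by decide
    exact key (π 0) (π 1) (π 2) h1 h2 h3 h4 h5 h6
end

section
/- Let G be a finite simple graph containing no cycle of length 4, 5, 6, 7, or 8, and let K be a cycle in G of length at most 12. If e_1 and e_2 are distinct chords of K, then there does not exist a triangle in G containing both e_1 and e_2. -/
/-!
Two distinct edges of a triangle share a vertex `x`, so we get chords `xy` and `xz` of `K` with
`y ~ z`. A chord of a cycle of length `L` splits it into arcs of lengths `i` and `L - i`, and
closing either arc with the chord gives a cycle of length `i + 1` or `L - i + 1`; avoiding the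
lengths `4, …, 8` forces each arc to have length `2` or at least `8`, hence (as `L ≤ 12`) the
chords from `x` end at the vertices at distance `2` on either side of `x`. Closing the long arc
from `x` to `z` with `xz` then gives a cycle `z, x, ·, y, …, z` on which `zy` would be a chord
cutting off an arc of length `3`, which is impossible.
-/

namespace SimpleGraph.Walk

variable {V : Type*} {G : SimpleGraph V} {u : V} {c : G.Walk u u} {i : ℕ}

lemma IsCycle.isCycle_cons_take (hc : c.IsCycle) (hi : 2 ≤ i) (hic : i < c.length)
    (h : G.Adj (c.getVert i) u) : (cons h (c.take i)).IsCycle := by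
  have hp : (c.take i).IsPath := hc.isPath_take hic
  refine (cons_isCycle_iff _ h).mpr ⟨hp, fun he => ?_⟩
  have hsnd := hp.eq_snd_of_mem_edges (Sym2.eq_swap ▸ he)
  rw [snd, take_getVert, min_eq_right (by omega)] at hsnd
  have := hc.getVert_injOn (show 1 ≤ i ∧ i ≤ c.length by omega)
    (show 1 ≤ 1 ∧ 1 ≤ c.length by omega) hsnd
  omega

lemma IsCycle.isCycle_cons_drop (hc : c.IsCycle) (hi : 0 < i) (hic : i + 2 ≤ c.length)
    (h : G.Adj u (c.getVert i)) : (cons h (c.drop i)).IsCycle := by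
  have hp : (c.drop i).IsPath := hc.isPath_drop hi
  refine (cons_isCycle_iff _ h).mpr ⟨hp, fun he => ?_⟩
  have hsnd := hp.eq_snd_of_mem_edges (Sym2.eq_swap ▸ he)
  rw [snd, drop_getVert] at hsnd
  have := (hc.getVert_endpoint_iff (by omega)).mp hsnd.symm
  omega

lemma exists_getVert_eq_of_isChord {y : V} (h : c.IsChord s(u, y)) :
    ∃ i, 2 ≤ i ∧ i + 2 ≤ c.length ∧ c.getVert i = y := by
  obtain ⟨hadj, hchord, -, hy⟩ := isChord_sym2Mk.mp h
  obtain ⟨i, rfl, hi⟩ := mem_support_iff_exists_getVert.mp hy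
  have hnil : ¬ c.Nil := fun hn => hadj.ne (by simp [hn.eq_nil])
  have h0 : i ≠ 0 := by rintro rfl; exact hadj.ne (getVert_zero c).symm
  have hL : i ≠ c.length := by rintro rfl; exact hadj.ne (getVert_length c).symm
  have h1 : i ≠ 1 := by rintro rfl; exact hchord (mk_start_snd_mem_edges hnil)
  have hL1 : i ≠ c.length - 1 := by
    rintro rfl; exact hchord (Sym2.eq_swap ▸ mk_penultimate_end_mem_edges hnil)
  exact ⟨i, by omega, by omega, rfl⟩

lemma IsChord.rotate [DecidableEq V] {x y v : V} (h : c.IsChord s(x, y)) (hv : v ∈ c.support) :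
    (c.rotate v hv).IsChord s(x, y) := by
  rw [isChord_sym2Mk] at h ⊢
  simpa [(rotate_edges c v hv).perm.mem_iff] using h

lemma IsCycle.arc_lengths_of_adj_getVert
    (hG : ∀ (u : V) (W : G.Walk u u), W.IsCycle → ¬ (4 ≤ W.length ∧ W.length ≤ 8))
    (hc : c.IsCycle) (hi : 2 ≤ i) (hic : i + 2 ≤ c.length) (h : G.Adj u (c.getVert i)) :
    (i = 2 ∨ 8 ≤ i) ∧ (c.length - i = 2 ∨ 8 ≤ c.length - i) := by
  have htake := hG _ _ (hc.isCycle_cons_take hi (by omega) h.symm)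
  have hdrop := hG _ _ (hc.isCycle_cons_drop (by omega) hic h)
  simp only [length_cons, take_length, drop_length] at htake hdrop
  omega

lemma IsCycle.not_adj_getVert_sub_two_getVert_two
    (hG : ∀ (u : V) (W : G.Walk u u), W.IsCycle → ¬ (4 ≤ W.length ∧ W.length ≤ 8))
    (hc : c.IsCycle) (hc6 : 6 ≤ c.length) (h : G.Adj (c.getVert (c.length - 2)) u) :
    ¬ G.Adj (c.getVert (c.length - 2)) (c.getVert 2) := by
  intro hadj
  have hE := hc.isCycle_cons_take (by omega) (by omega) h
  have h3 : (cons h (c.take (c.length - 2))).getVert 3 = c.getVert 2 := by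
    rw [getVert_cons_succ, take_getVert, min_eq_right (by omega)]
  have := hE.arc_lengths_of_adj_getVert (i := 3) hG (by norm_num)
    (by simp only [length_cons, take_length]; omega) (h3 ▸ hadj)
  omega

lemma IsCycle.not_adj_of_isChord_of_isChord [DecidableEq V]
    (hG : ∀ (u : V) (W : G.Walk u u), W.IsCycle → ¬ (4 ≤ W.length ∧ W.length ≤ 8))
    {w : V} {K : G.Walk w w} (hK : K.IsCycle) (hlen : K.length ≤ 12) {x y z : V}
    (hy : K.IsChord s(x, y)) (hz : K.IsChord s(x, z)) : ¬ G.Adj y z := by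
  intro hyz
  have hx : x ∈ K.support := (isChord_sym2Mk.mp hy).2.2.1
  set c := K.rotate x hx
  have hc : c.IsCycle := hK.rotate hx
  have hL : c.length ≤ 12 := by simpa [c] using hlen
  obtain ⟨i, hi, hic, rfl⟩ := exists_getVert_eq_of_isChord (hy.rotate hx)
  obtain ⟨j, hj, hjc, rfl⟩ := exists_getVert_eq_of_isChord (hz.rotate hx)
  have hxi := (isChord_sym2Mk.mp hy).1
  have hxj := (isChord_sym2Mk.mp hz).1
  have hij : i ≠ j := by rintro rfl; exact hyz.ne rfl
  have harc_i := hc.arc_lengths_of_adj_getVert hG hi hic hxi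
  have harc_j := hc.arc_lengths_of_adj_getVert hG hj hjc hxj
  obtain ⟨rfl, rfl⟩ | ⟨rfl, rfl⟩ : (i = 2 ∧ j = c.length - 2) ∨ (i = c.length - 2 ∧ j = 2) := by
    omega
  · exact hc.not_adj_getVert_sub_two_getVert_two hG (by omega) hxj.symm hyz.symm
  · exact hc.not_adj_getVert_sub_two_getVert_two hG (by omega) hxi.symm hyz

lemma exists_eq_mk_of_mem_edges_of_length_eq_three {t : V} {T : G.Walk t t} (hT : T.length = 3)
    {e₁ e₂ : Sym2 V} (he₁ : e₁ ∈ T.edges) (he₂ : e₂ ∈ T.edges) (hne : e₁ ≠ e₂) :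
    ∃ x y z, e₁ = s(x, y) ∧ e₂ = s(x, z) ∧ G.Adj y z := by
  obtain ⟨a, b, hta, hab, hbt, rfl⟩ : ∃ (a b : V) (hta : G.Adj t a) (hab : G.Adj a b)
      (hbt : G.Adj b t), T = cons hta (cons hab (cons hbt nil)) := by
    rcases T with _ | ⟨hta, _ | ⟨hab, _ | ⟨hbt, _ | ⟨_, _⟩⟩⟩⟩ <;> simp at hT
    exact ⟨_, _, hta, hab, hbt, rfl⟩
  simp only [edges_cons, edges_nil, List.mem_cons, List.not_mem_nil, or_false] at he₁ he₂
  rcases he₁ with rfl | rfl | rfl <;> rcases he₂ with rfl | rfl | rfl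
  all_goals first
    | exact absurd rfl hne
    | exact ⟨t, a, b, rfl, Sym2.eq_swap, hab⟩
    | exact ⟨a, t, b, Sym2.eq_swap, rfl, hbt.symm⟩
    | exact ⟨a, b, t, rfl, Sym2.eq_swap, hbt⟩
    | exact ⟨b, a, t, Sym2.eq_swap, rfl, hta.symm⟩
    | exact ⟨t, b, a, Sym2.eq_swap, rfl, hab.symm⟩
    | exact ⟨b, t, a, rfl, Sym2.eq_swap, hta⟩

end SimpleGraph.Walk

open SimpleGraph.Walk

theorem no_triangle_with_two_chords_general {V : Type*} (G : SimpleGraph V)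
    (hG : ∀ (u : V) (W : G.Walk u u), W.IsCycle → ¬ (4 ≤ W.length ∧ W.length ≤ 8))
    {w : V} (K : G.Walk w w) (hK : K.IsCycle) (hlen : K.length ≤ 12)
    {a₁ b₁ a₂ b₂ : V}
    (hab₁ : G.Adj a₁ b₁) (ha₁ : a₁ ∈ K.support) (hb₁ : b₁ ∈ K.support)
    (hchord₁ : s(a₁, b₁) ∉ K.edges)
    (hab₂ : G.Adj a₂ b₂) (ha₂ : a₂ ∈ K.support) (hb₂ : b₂ ∈ K.support)
    (hchord₂ : s(a₂, b₂) ∉ K.edges)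
    (hne : s(a₁, b₁) ≠ s(a₂, b₂)) :
    ¬ ∃ (t : V) (T : G.Walk t t), T.IsCycle ∧ T.length = 3 ∧
        s(a₁, b₁) ∈ T.edges ∧ s(a₂, b₂) ∈ T.edges := by
  classical
  rintro ⟨t, T, -, hT, he₁, he₂⟩
  obtain ⟨x, y, z, hxy, hxz, hyz⟩ := exists_eq_mk_of_mem_edges_of_length_eq_three hT he₁ he₂ hne
  have hy : K.IsChord s(x, y) := hxy ▸ isChord_sym2Mk.mpr ⟨hab₁, hchord₁, ha₁, hb₁⟩
  have hz : K.IsChord s(x, z) := hxz ▸ isChord_sym2Mk.mpr ⟨hab₂, hchord₂, ha₂, hb₂⟩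
  exact hK.not_adj_of_isChord_of_isChord hG hlen hy hz hyz

/-- Lemma 5(d): in a finite simple graph with no cycles of lengths 4 to 8, if `e₁ = a₁b₁`
and `e₂ = a₂b₂` are distinct chords of a cycle `K` of length at most 12, then no triangle
of `G` contains both `e₁` and `e₂`. -/
theorem no_triangle_with_two_chords {V : Type*} [Fintype V] (G : SimpleGraph V)
    (hG : ∀ (u : V) (W : G.Walk u u), W.IsCycle → ¬ (4 ≤ W.length ∧ W.length ≤ 8))
    {w : V} (K : G.Walk w w) (hK : K.IsCycle) (hlen : K.length ≤ 12)
    {a₁ b₁ a₂ b₂ : V}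
    (hab₁ : G.Adj a₁ b₁) (ha₁ : a₁ ∈ K.support) (hb₁ : b₁ ∈ K.support)
    (hchord₁ : s(a₁, b₁) ∉ K.edges)
    (hab₂ : G.Adj a₂ b₂) (ha₂ : a₂ ∈ K.support) (hb₂ : b₂ ∈ K.support)
    (hchord₂ : s(a₂, b₂) ∉ K.edges)
    (hne : s(a₁, b₁) ≠ s(a₂, b₂)) :
    ¬ ∃ (t : V) (T : G.Walk t t), T.IsCycle ∧ T.length = 3 ∧
        s(a₁, b₁) ∈ T.edges ∧ s(a₂, b₂) ∈ T.edges :=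
  no_triangle_with_two_chords_general G hG K hK hlen hab₁ ha₁ hb₁ hchord₁ hab₂ ha₂ hb₂ hchord₂ hne
end
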